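/- Let d ≥ 1, β > −1/2, γ > −1, n ∈ ℕ and 1 ≤ p < ∞. Let f be a measurable function on Λ^{d+1}_{a,b,c} with ∫_{Λ^{d+1}_{a,b,c}} |f|^p W^{β,γ}_{a,b,c} dx dt < ∞. Then inf_{g} (∫_{Λ^{d+1}_{a,b,c}} |f−g|^p W^{β,γ}_{a,b,c} dx dt)^{1/p} = (b−a)^{1/p} · inf_{G} (∫_{B^{d+1}₊} |f∘ψ⁻¹ − G|^p |v|^{2β}(1−‖y‖²−v²)^{γ} dy dv)^{1/p}, where both infima are taken over polynomials in d+1 variables of degree at most n that are even in the last variable. -/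

import Mathlib

open MeasureTheory

noncomputable section

/-- Euclidean space `ℝ^d`. -/
abbrev Euc (d : ℕ) := EuclideanSpace ℝ (Fin d)

/-- The domain `Λ^{d+1}_{a,b,c}`. -/
def LamD (d : ℕ) (a b c : ℝ) : Set (Euc d × ℝ) :=
  {p | 0 ≤ p.2 ∧ ‖p.1‖ ≤ 1 ∧ a + (c - a) * ‖p.1‖ ^ 2 ≤ p.2 ^ 2 ∧
       p.2 ^ 2 ≤ b + (c - b) * ‖p.1‖ ^ 2}

/-- The closed upper half-ball `B^{d+1}₊`. -/
def ballPlus (d : ℕ) : Set (Euc d × ℝ) := {p | ‖p.1‖ ^ 2 + p.2 ^ 2 ≤ 1 ∧ 0 ≤ p.2}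

/-- The inverse map `ψ⁻¹(y,v) = (y, sqrt((b−a)v² + a(1−‖y‖²) + c‖y‖²))`. -/
def psiDInv (d : ℕ) (a b c : ℝ) (p : Euc d × ℝ) : Euc d × ℝ :=
  (p.1, Real.sqrt ((b - a) * p.2 ^ 2 + a * (1 - ‖p.1‖ ^ 2) + c * ‖p.1‖ ^ 2))

/-- The weight `W^{β,γ}_{a,b,c}` on `Λ^{d+1}_{a,b,c}`. -/
def WD (d : ℕ) (a b c β γ : ℝ) (p : Euc d × ℝ) : ℝ :=
  p.2 * ((-a + (a - c) * ‖p.1‖ ^ 2 + p.2 ^ 2) / (b - a)) ^ (β - 1 / 2) *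
    ((b - (b - c) * ‖p.1‖ ^ 2 - p.2 ^ 2) / (b - a)) ^ γ

/-- Evaluation of a polynomial in `d+1` variables at a point of `ℝ^d × ℝ`. -/
def evP (d : ℕ) (R : MvPolynomial (Fin (d + 1)) ℝ) (p : Euc d × ℝ) : ℝ :=
  MvPolynomial.eval (Fin.snoc (fun i => p.1 i) p.2) R

/-- A polynomial in `d+1` variables is even in the last variable. -/
def EvenLast (d : ℕ) (R : MvPolynomial (Fin (d + 1)) ℝ) : Prop :=
  ∀ (x : Euc d) (t : ℝ), evP d R (x, -t) = evP d R (x, t)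

/-! An even polynomial in `t` is a polynomial in `x` and `t²`, and both `ψ` and `ψ⁻¹` replace
`t²` by a quadratic polynomial in `(x, t)`.  Hence `P ↦ P ∘ ψ⁻¹` maps the even polynomials of
degree at most `n` on `Λ^{d+1}_{a,b,c}` onto those on `B^{d+1}₊`.  The Jacobian of `ψ⁻¹` is
`(b − a) v / t`, which turns `W^{β,γ}_{a,b,c}(x, t) dx dt` into
`(b − a) |v|^{2β} (1 − ‖y‖² − v²)^γ dy dv`, so the two sets of errors are proportional. -/

open MvPolynomial Set

theorem LinearMap.det_fst_prod {K E : Type*} [Field K] [AddCommGroup E] [Module K E]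
    [FiniteDimensional K E] (L : E × K →ₗ[K] K) :
    ((LinearMap.fst K E K).prod L).det = L (0, 1) := by
  -- `T` preserves `0 × K`, acts on it by `L (0, 1)` and trivially on the quotient.
  set T := (LinearMap.fst K E K).prod L
  let W := LinearMap.range (LinearMap.inr K E K)
  have hW : W ≤ W.comap T := by
    rintro _ ⟨w, rfl⟩
    exact ⟨L (0, w), by simp [T]⟩
  have hQ : W.mapQ W T hW = LinearMap.id := by
    refine Submodule.linearMap_qext _ (LinearMap.ext fun v => ?_)
    simp only [LinearMap.coe_comp, Function.comp_apply, Submodule.mkQ_apply,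
      Submodule.mapQ_apply, LinearMap.id_coe, id_eq]
    rw [Submodule.Quotient.eq]
    exact ⟨L v - v.2, by ext <;> simp [T]⟩
  have hR : LinearMap.restrict (p := W) (q := W) T hW = L (0, 1) • LinearMap.id := by
    refine LinearMap.ext fun ⟨x, hx⟩ => ?_
    obtain ⟨w, rfl⟩ := hx
    have : L (0, w) = w * L (0, 1) := by rw [← smul_eq_mul, ← map_smul]; simp
    ext <;> simp [T, this, mul_comm]
  have hrank : Module.finrank K W = 1 := by
    rw [LinearMap.finrank_range_of_inj LinearMap.inr_injective, Module.finrank_self]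
  rw [LinearMap.det_eq_det_mul_det W T hW, hQ, hR, LinearMap.det_smul, hrank, LinearMap.det_id,
    LinearMap.det_id]
  simp

theorem MeasureTheory.Measure.prod_graph_eq_zero {α : Type*} [MeasurableSpace α]
    (μ : Measure α) {f : α → ℝ} (hf : Measurable f) :
    μ.prod volume {p : α × ℝ | p.2 = f p.1} = 0 :=
  measure_prod_null_of_ae_null (measurableSet_graph hf) (ae_of_all _ fun x => by simp)

instance (d : ℕ) : (volume : Measure (Euc d × ℝ)).IsAddHaarMeasure :=
  Measure.prod.instIsAddHaarMeasure _ _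

section Polynomials

variable {d : ℕ}

lemma evP_eq_sum (P : MvPolynomial (Fin (d + 1)) ℝ) (x : Euc d) (t : ℝ) :
    evP d P (x, t) = ∑ m ∈ P.support,
      P.coeff m * ((∏ j : Fin d, x j ^ m j.castSucc) * t ^ m (Fin.last d)) := by
  rw [evP, eval_eq']
  refine Finset.sum_congr rfl fun m _ => ?_
  simp [Fin.prod_univ_castSucc]

/-- The polynomial `P(x, √G)`: the odd powers of the last variable of `P` are dropped, which is
harmless when `P` is even in it. -/
def sqrtSubst (P G : MvPolynomial (Fin (d + 1)) ℝ) : MvPolynomial (Fin (d + 1)) ℝ :=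
  ∑ m ∈ P.support, C (P.coeff m) * ((∏ j : Fin d, X j.castSucc ^ m j.castSucc) *
    if Even (m (Fin.last d)) then G ^ (m (Fin.last d) / 2) else 0)

lemma evP_sqrtSubst (P G : MvPolynomial (Fin (d + 1)) ℝ) (p : Euc d × ℝ) :
    evP d (sqrtSubst P G) p = ∑ m ∈ P.support, P.coeff m *
      ((∏ j : Fin d, p.1 j ^ m j.castSucc) *
        if Even (m (Fin.last d)) then evP d G p ^ (m (Fin.last d) / 2) else 0) := by
  simp only [evP, sqrtSubst, map_sum, map_mul, map_prod, map_pow, eval_C, eval_X,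
    Fin.snoc_castSucc, apply_ite (eval _), map_zero]

lemma sqrt_pow_add_neg_sqrt_pow {g : ℝ} (hg : 0 ≤ g) (k : ℕ) :
    √g ^ k + (-√g) ^ k = 2 * if Even k then g ^ (k / 2) else 0 := by
  rcases Nat.even_or_odd k with hk | hk
  · obtain ⟨j, rfl⟩ := hk
    rw [if_pos ⟨j, rfl⟩, Even.neg_pow ⟨j, rfl⟩, ← two_mul, ← two_mul, pow_mul, Real.sq_sqrt hg]
    congr 2
    omega
  · rw [if_neg (Nat.not_even_iff_odd.2 hk), hk.neg_pow]
    ring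

lemma evP_sqrtSubst_of_evenLast {P : MvPolynomial (Fin (d + 1)) ℝ} (hP : EvenLast d P)
    (G : MvPolynomial (Fin (d + 1)) ℝ) {p : Euc d × ℝ} (hG : 0 ≤ evP d G p) :
    evP d (sqrtSubst P G) p = evP d P (p.1, √(evP d G p)) := by
  have hsum := congrArg₂ (· + ·) (evP_eq_sum P p.1 (√(evP d G p)))
    (evP_eq_sum P p.1 (-√(evP d G p)))
  simp only [hP _ _, ← Finset.sum_add_distrib, ← mul_add, sqrt_pow_add_neg_sqrt_pow hG,
    mul_left_comm _ (2 : ℝ), ← Finset.mul_sum] at hsum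
  rw [evP_sqrtSubst]
  linarith

lemma totalDegree_sqrtSubst_le (P : MvPolynomial (Fin (d + 1)) ℝ)
    {G : MvPolynomial (Fin (d + 1)) ℝ} (hG : G.totalDegree ≤ 2) :
    (sqrtSubst P G).totalDegree ≤ P.totalDegree := by
  refine (totalDegree_finsetSum _ _).trans (Finset.sup_le fun m hm => ?_)
  refine (totalDegree_mul _ _).trans ?_
  rw [totalDegree_C, zero_add]
  refine (totalDegree_mul _ _).trans ((add_le_add (b := ∑ j : Fin d, m j.castSucc)
    (d := m (Fin.last d) / 2 * 2) ?_ ?_).trans ?_)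
  · refine (totalDegree_finsetProd _ _).trans (Finset.sum_le_sum fun j _ => ?_)
    exact (totalDegree_pow _ _).trans (by rw [totalDegree_X, mul_one])
  · split_ifs
    · exact (totalDegree_pow _ _).trans (Nat.mul_le_mul_left _ hG)
    · simp
  · refine le_trans ?_ (le_totalDegree hm)
    rw [Finsupp.sum_fintype _ _ (fun _ => rfl), Fin.sum_univ_castSucc]
    exact add_le_add le_rfl (Nat.div_mul_le_self _ _)

lemma evenLast_sqrtSubst (P : MvPolynomial (Fin (d + 1)) ℝ)
    {G : MvPolynomial (Fin (d + 1)) ℝ} (hG : EvenLast d G) : EvenLast d (sqrtSubst P G) := by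
  intro x t
  simp only [evP_sqrtSubst, hG x t]

def quadLast (d : ℕ) (r s u : ℝ) : MvPolynomial (Fin (d + 1)) ℝ :=
  C r + C s * ∑ j : Fin d, X j.castSucc ^ 2 + C u * X (Fin.last d) ^ 2

lemma evP_quadLast (r s u : ℝ) (p : Euc d × ℝ) :
    evP d (quadLast d r s u) p = r + s * ‖p.1‖ ^ 2 + u * p.2 ^ 2 := by
  simp [evP, quadLast, EuclideanSpace.norm_sq_eq]

lemma totalDegree_quadLast_le (r s u : ℝ) : (quadLast d r s u).totalDegree ≤ 2 := by
  unfold quadLast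
  refine (totalDegree_add _ _).trans (max_le ((totalDegree_add _ _).trans (max_le ?_ ?_)) ?_)
  · simp
  · refine (totalDegree_mul _ _).trans ?_
    rw [totalDegree_C, zero_add]
    refine (totalDegree_finsetSum _ _).trans (Finset.sup_le fun j _ => ?_)
    exact (totalDegree_pow _ _).trans (by rw [totalDegree_X])
  · refine (totalDegree_mul _ _).trans ?_
    rw [totalDegree_C, zero_add]
    exact (totalDegree_pow _ _).trans (by rw [totalDegree_X])

lemma evenLast_quadLast (r s u : ℝ) : EvenLast d (quadLast d r s u) := by
  intro x t
  simp [evP_quadLast]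

lemma EvenLast.exists_evP_sqrtSubst {P : MvPolynomial (Fin (d + 1)) ℝ} (hP : EvenLast d P)
    (r s u : ℝ) : ∃ Q : MvPolynomial (Fin (d + 1)) ℝ, Q.totalDegree ≤ P.totalDegree ∧
      EvenLast d Q ∧ ∀ p : Euc d × ℝ, 0 ≤ r + s * ‖p.1‖ ^ 2 + u * p.2 ^ 2 →
        evP d Q p = evP d P (p.1, √(r + s * ‖p.1‖ ^ 2 + u * p.2 ^ 2)) :=
  ⟨sqrtSubst P (quadLast d r s u), totalDegree_sqrtSubst_le P (totalDegree_quadLast_le r s u),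
    evenLast_sqrtSubst P (evenLast_quadLast r s u),
    fun p hp => by rw [evP_sqrtSubst_of_evenLast hP _ (by rwa [evP_quadLast]), evP_quadLast]⟩

end Polynomials

section Geometry

variable {d : ℕ} {a b c : ℝ}

/-- `𝔱(‖x‖, t)²`. -/
def tSq (d : ℕ) (a b c : ℝ) (p : Euc d × ℝ) : ℝ := (-a + (a - c) * ‖p.1‖ ^ 2 + p.2 ^ 2) / (b - a)

def psiD (d : ℕ) (a b c : ℝ) (p : Euc d × ℝ) : Euc d × ℝ := (p.1, √(tSq d a b c p))

@[simp] lemma psiD_fst (p : Euc d × ℝ) : (psiD d a b c p).1 = p.1 := rfl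

@[simp] lemma psiDInv_fst (p : Euc d × ℝ) : (psiDInv d a b c p).1 = p.1 := rfl

lemma tSq_eq_quadratic (p : Euc d × ℝ) :
    tSq d a b c p = -a / (b - a) + (a - c) / (b - a) * ‖p.1‖ ^ 2 + (b - a)⁻¹ * p.2 ^ 2 := by
  unfold tSq
  ring

lemma WD_eq (hab : a < b) (β γ : ℝ) (p : Euc d × ℝ) :
    WD d a b c β γ p =
      p.2 * tSq d a b c p ^ (β - 1 / 2) * (1 - ‖p.1‖ ^ 2 - tSq d a b c p) ^ γ := by
  have : (b - (b - c) * ‖p.1‖ ^ 2 - p.2 ^ 2) / (b - a) = 1 - ‖p.1‖ ^ 2 - tSq d a b c p := by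
    unfold tSq
    field_simp [(sub_pos.2 hab).ne']
    ring
  rw [WD, this, tSq]

lemma norm_sq_le_one_of_mem_ballPlus {p : Euc d × ℝ} (hp : p ∈ ballPlus d) : ‖p.1‖ ^ 2 ≤ 1 := by
  nlinarith [hp.1, sq_nonneg p.2]

lemma sq_psiDInv_snd (ha : 0 ≤ a) (hab : a < b) (hc : 0 ≤ c) {p : Euc d × ℝ}
    (hp : p ∈ ballPlus d) :
    (psiDInv d a b c p).2 ^ 2 = (b - a) * p.2 ^ 2 + a * (1 - ‖p.1‖ ^ 2) + c * ‖p.1‖ ^ 2 := by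
  have := norm_sq_le_one_of_mem_ballPlus hp
  refine Real.sq_sqrt ?_
  have : 0 ≤ b - a := by linarith
  positivity

lemma tSq_psiDInv (ha : 0 ≤ a) (hab : a < b) (hc : 0 ≤ c) {p : Euc d × ℝ}
    (hp : p ∈ ballPlus d) : tSq d a b c (psiDInv d a b c p) = p.2 ^ 2 := by
  rw [tSq, sq_psiDInv_snd ha hab hc hp, psiDInv_fst]
  field_simp [(sub_pos.2 hab).ne']
  ring

lemma psiD_psiDInv (ha : 0 ≤ a) (hab : a < b) (hc : 0 ≤ c) {p : Euc d × ℝ}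
    (hp : p ∈ ballPlus d) : psiD d a b c (psiDInv d a b c p) = p := by
  rw [psiD, tSq_psiDInv ha hab hc hp, Real.sqrt_sq hp.2]
  rfl

lemma mem_LamD_iff (hab : a < b) {p : Euc d × ℝ} :
    p ∈ LamD d a b c ↔
      0 ≤ p.2 ∧ ‖p.1‖ ≤ 1 ∧ 0 ≤ tSq d a b c p ∧ ‖p.1‖ ^ 2 + tSq d a b c p ≤ 1 := by
  have hba : 0 < b - a := sub_pos.2 hab
  have lower : 0 ≤ tSq d a b c p ↔ a + (c - a) * ‖p.1‖ ^ 2 ≤ p.2 ^ 2 := by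
    rw [tSq, le_div_iff₀ hba, zero_mul]
    constructor <;> intro h <;> linarith
  have upper : ‖p.1‖ ^ 2 + tSq d a b c p ≤ 1 ↔ p.2 ^ 2 ≤ b + (c - b) * ‖p.1‖ ^ 2 := by
    rw [← le_sub_iff_add_le', tSq, div_le_iff₀ hba]
    constructor <;> intro h <;> linarith
  rw [lower, upper]
  rfl

lemma sq_psiD_snd (hab : a < b) {p : Euc d × ℝ} (hp : p ∈ LamD d a b c) :
    (psiD d a b c p).2 ^ 2 = tSq d a b c p :=
  Real.sq_sqrt ((mem_LamD_iff hab).1 hp).2.2.1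

lemma psiD_mem_ballPlus (hab : a < b) {p : Euc d × ℝ} (hp : p ∈ LamD d a b c) :
    psiD d a b c p ∈ ballPlus d := by
  refine ⟨?_, Real.sqrt_nonneg _⟩
  rw [sq_psiD_snd hab hp]
  exact ((mem_LamD_iff hab).1 hp).2.2.2

lemma psiDInv_psiD (hab : a < b) {p : Euc d × ℝ} (hp : p ∈ LamD d a b c) :
    psiDInv d a b c (psiD d a b c p) = p := by
  have hradicand : (b - a) * (psiD d a b c p).2 ^ 2 + a * (1 - ‖p.1‖ ^ 2) + c * ‖p.1‖ ^ 2 =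
      p.2 ^ 2 := by
    rw [sq_psiD_snd hab hp, tSq]
    field_simp [(sub_pos.2 hab).ne']
    ring
  refine Prod.ext rfl ?_
  change √((b - a) * (psiD d a b c p).2 ^ 2 + a * (1 - ‖p.1‖ ^ 2) + c * ‖p.1‖ ^ 2) = p.2
  rw [hradicand, Real.sqrt_sq hp.1]

lemma psiDInv_mem_LamD (ha : 0 ≤ a) (hab : a < b) (hc : 0 ≤ c) {p : Euc d × ℝ}
    (hp : p ∈ ballPlus d) : psiDInv d a b c p ∈ LamD d a b c := by
  have := norm_sq_le_one_of_mem_ballPlus hp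
  rw [mem_LamD_iff hab, tSq_psiDInv ha hab hc hp]
  exact ⟨Real.sqrt_nonneg _, by simpa [psiDInv] using this, sq_nonneg _, hp.1⟩

lemma psiDInv_image_ballPlus_diff (ha : 0 ≤ a) (hab : a < b) (hc : 0 ≤ c) :
    psiDInv d a b c '' (ballPlus d \ {p | p.2 = 0}) =
      LamD d a b c \ {p | tSq d a b c p = 0} := by
  ext p
  constructor
  · rintro ⟨p, ⟨hp, hp0⟩, rfl⟩
    refine ⟨psiDInv_mem_LamD ha hab hc hp, ?_⟩
    simpa [tSq_psiDInv ha hab hc hp] using hp0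
  · rintro ⟨hp, hp0⟩
    refine ⟨psiD d a b c p, ⟨psiD_mem_ballPlus hab hp, ?_⟩, psiDInv_psiD hab hp⟩
    simpa [← sq_psiD_snd hab hp] using hp0

end Geometry

section Correspondence

variable {d : ℕ} {a b c : ℝ}

lemma EvenLast.exists_eqOn_comp_psiDInv (ha : 0 ≤ a) (hab : a < b) (hc : 0 ≤ c)
    {P : MvPolynomial (Fin (d + 1)) ℝ} (hP : EvenLast d P) :
    ∃ Q : MvPolynomial (Fin (d + 1)) ℝ, Q.totalDegree ≤ P.totalDegree ∧ EvenLast d Q ∧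
      EqOn (evP d P ∘ psiDInv d a b c) (evP d Q) (ballPlus d) := by
  obtain ⟨Q, hdeg, hQ, hPQ⟩ := hP.exists_evP_sqrtSubst a (c - a) (b - a)
  refine ⟨Q, hdeg, hQ, fun p hp => ?_⟩
  have hradicand : (b - a) * p.2 ^ 2 + a * (1 - ‖p.1‖ ^ 2) + c * ‖p.1‖ ^ 2 =
      a + (c - a) * ‖p.1‖ ^ 2 + (b - a) * p.2 ^ 2 := by ring
  have hnonneg := sq_psiDInv_snd ha hab hc hp ▸ sq_nonneg (psiDInv d a b c p).2
  rw [hradicand] at hnonneg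
  rw [hPQ p hnonneg, Function.comp_apply, psiDInv, hradicand]

lemma EvenLast.exists_comp_psiDInv_eqOn (ha : 0 ≤ a) (hab : a < b) (hc : 0 ≤ c)
    {Q : MvPolynomial (Fin (d + 1)) ℝ} (hQ : EvenLast d Q) :
    ∃ P : MvPolynomial (Fin (d + 1)) ℝ, P.totalDegree ≤ Q.totalDegree ∧ EvenLast d P ∧
      EqOn (evP d P ∘ psiDInv d a b c) (evP d Q) (ballPlus d) := by
  obtain ⟨P, hdeg, hP, hPQ⟩ := hQ.exists_evP_sqrtSubst (-a / (b - a)) ((a - c) / (b - a)) (b - a)⁻¹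
  refine ⟨P, hdeg, hP, fun p hp => ?_⟩
  have htSq := tSq_eq_quadratic (a := a) (b := b) (c := c) (psiDInv d a b c p)
  have hnonneg := tSq_psiDInv ha hab hc hp ▸ sq_nonneg p.2
  rw [htSq] at hnonneg
  rw [Function.comp_apply, hPQ _ hnonneg, ← htSq]
  exact congrArg (evP d Q) (psiD_psiDInv ha hab hc hp)

end Correspondence

section ChangeOfVariables

variable {d : ℕ} {a b c : ℝ}

lemma measurableSet_LamD : MeasurableSet (LamD d a b c) := by
  unfold LamD
  measurability

lemma measurableSet_ballPlus : MeasurableSet (ballPlus d) := by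
  unfold ballPlus
  measurability

lemma volume_setOf_snd_eq_zero : volume {p : Euc d × ℝ | p.2 = 0} = 0 :=
  Measure.prod_graph_eq_zero volume measurable_const

lemma volume_setOf_tSq_eq_zero (hab : a < b) : volume {p : Euc d × ℝ | tSq d a b c p = 0} = 0 := by
  let g : Euc d → ℝ := fun x => √(a + (c - a) * ‖x‖ ^ 2)
  have hg : Measurable g := by fun_prop
  refine measure_mono_null (t := {p | p.2 = g p.1} ∪ {p | p.2 = -g p.1}) (fun p hp => ?_)
    (measure_union_null (Measure.prod_graph_eq_zero volume hg)
      (Measure.prod_graph_eq_zero volume hg.neg))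
  have hp' : p.2 ^ 2 = a + (c - a) * ‖p.1‖ ^ 2 := by
    have := (div_eq_zero_iff.1 (show tSq d a b c p = 0 from hp)).resolve_right (sub_pos.2 hab).ne'
    linarith
  have habs : g p.1 = |p.2| := by simp only [g, ← hp', Real.sqrt_sq_eq_abs]
  rcases abs_choice p.2 with h | h
  · exact Or.inl (by simp [habs, h])
  · exact Or.inr (by simp [habs, h])

lemma exists_hasFDerivAt_psiDInv {p : Euc d × ℝ}
    (hp : (b - a) * p.2 ^ 2 + a * (1 - ‖p.1‖ ^ 2) + c * ‖p.1‖ ^ 2 ≠ 0) :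
    ∃ L : Euc d × ℝ →L[ℝ] ℝ,
      HasFDerivAt (psiDInv d a b c) ((ContinuousLinearMap.fst ℝ (Euc d) ℝ).prod L) p ∧
        L (0, 1) = (b - a) * p.2 / (psiDInv d a b c p).2 := by
  have hR : HasFDerivAt
      (fun q : Euc d × ℝ => (b - a) * q.2 ^ 2 + a * (1 - ‖q.1‖ ^ 2) + c * ‖q.1‖ ^ 2) _ p :=
    ((((hasFDerivAt_snd (p := p)).pow 2).const_mul (b - a)).add
      ((((hasFDerivAt_fst (p := p)).norm_sq).const_sub 1).const_mul a)).add
      ((hasFDerivAt_fst (p := p)).norm_sq.const_mul c)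
  refine ⟨_, (hasFDerivAt_fst (p := p)).prodMk (hR.sqrt hp), ?_⟩
  simp only [one_div, mul_inv_rev, Nat.add_one_sub_one, pow_one, nsmul_eq_mul, Nat.cast_ofNat,
    smul_neg, smul_add, add_apply, smul_apply, ContinuousLinearMap.coe_snd', smul_eq_mul, mul_one,
    neg_apply, ContinuousLinearMap.comp_apply, ContinuousLinearMap.coe_fst', coe_innerSL_apply,
    inner_zero_right, mul_zero, neg_zero, add_zero, psiDInv]
  field_simp

lemma differentiableAt_psiDInv {p : Euc d × ℝ}
    (hp : (b - a) * p.2 ^ 2 + a * (1 - ‖p.1‖ ^ 2) + c * ‖p.1‖ ^ 2 ≠ 0) :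
    DifferentiableAt ℝ (psiDInv d a b c) p := by
  obtain ⟨L, hL, -⟩ := exists_hasFDerivAt_psiDInv hp
  exact hL.differentiableAt

lemma det_fderiv_psiDInv {p : Euc d × ℝ}
    (hp : (b - a) * p.2 ^ 2 + a * (1 - ‖p.1‖ ^ 2) + c * ‖p.1‖ ^ 2 ≠ 0) :
    (fderiv ℝ (psiDInv d a b c) p).det = (b - a) * p.2 / (psiDInv d a b c p).2 := by
  obtain ⟨L, hL, hL01⟩ := exists_hasFDerivAt_psiDInv hp
  rw [hL.fderiv, ContinuousLinearMap.det, ContinuousLinearMap.coe_prod,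
    ContinuousLinearMap.coe_fst, LinearMap.det_fst_prod, ← hL01]
  rfl

lemma psiDInv_snd_pos (ha : 0 ≤ a) (hab : a < b) (hc : 0 ≤ c) {p : Euc d × ℝ}
    (hp : p ∈ ballPlus d) (hp0 : p.2 ≠ 0) : 0 < (psiDInv d a b c p).2 := by
  have h1 : 0 ≤ 1 - ‖p.1‖ ^ 2 := sub_nonneg.2 (norm_sq_le_one_of_mem_ballPlus hp)
  refine Real.sqrt_pos.2 ?_
  linarith [mul_pos (sub_pos.2 hab) (pow_pos (lt_of_le_of_ne hp.2 (Ne.symm hp0)) 2),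
    mul_nonneg ha h1, mul_nonneg hc (sq_nonneg ‖p.1‖)]

lemma abs_det_mul_WD_psiDInv (ha : 0 ≤ a) (hab : a < b) (hc : 0 ≤ c) (β γ : ℝ)
    {p : Euc d × ℝ} (hp : p ∈ ballPlus d) (hp0 : p.2 ≠ 0) :
    |(b - a) * p.2 / (psiDInv d a b c p).2| * WD d a b c β γ (psiDInv d a b c p) =
      (b - a) * (|p.2| ^ (2 * β) * (1 - ‖p.1‖ ^ 2 - p.2 ^ 2) ^ γ) := by
  have hv : 0 < p.2 := lt_of_le_of_ne hp.2 (Ne.symm hp0)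
  have hτ := psiDInv_snd_pos ha hab hc hp hp0
  have hpow : |p.2| ^ (2 * β) = p.2 * (p.2 ^ 2) ^ (β - 1 / 2) := calc
    |p.2| ^ (2 * β) = p.2 ^ (1 + 2 * (β - 1 / 2)) := by
      rw [abs_of_pos hv]
      ring_nf
    _ = p.2 * (p.2 ^ 2) ^ (β - 1 / 2) := by
      rw [Real.rpow_add hv, Real.rpow_one, Real.rpow_mul hv.le, Real.rpow_two]
  rw [WD_eq hab, tSq_psiDInv ha hab hc hp, psiDInv_fst, hpow,
    abs_of_pos (div_pos (mul_pos (sub_pos.2 hab) hv) hτ)]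
  field_simp

theorem integral_LamD_comp_psiD_mul_WD (ha : 0 ≤ a) (hab : a < b) (hc : 0 ≤ c) (β γ : ℝ)
    (F : Euc d × ℝ → ℝ) :
    ∫ p in LamD d a b c, F (psiD d a b c p) * WD d a b c β γ p =
      (b - a) * ∫ p in ballPlus d, F p * (|p.2| ^ (2 * β) * (1 - ‖p.1‖ ^ 2 - p.2 ^ 2) ^ γ) := by
  set B₀ := ballPlus d \ {p | p.2 = 0}
  have hB₀ : MeasurableSet B₀ :=
    measurableSet_ballPlus.diff (measurableSet_eq_fun measurable_snd measurable_const)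
  have hR : ∀ p ∈ B₀, (b - a) * p.2 ^ 2 + a * (1 - ‖p.1‖ ^ 2) + c * ‖p.1‖ ^ 2 ≠ 0 :=
    fun p hp => sq_psiDInv_snd ha hab hc hp.1 ▸
      (pow_pos (psiDInv_snd_pos ha hab hc hp.1 hp.2) 2).ne'
  have hinj : InjOn (psiDInv d a b c) B₀ :=
    LeftInvOn.injOn (f₁' := psiD d a b c) fun p hp => psiD_psiDInv ha hab hc hp.1
  calc ∫ p in LamD d a b c, F (psiD d a b c p) * WD d a b c β γ p
      = ∫ p in psiDInv d a b c '' B₀, F (psiD d a b c p) * WD d a b c β γ p := by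
        rw [psiDInv_image_ballPlus_diff ha hab hc]
        exact setIntegral_congr_set (sdiff_null_ae_eq_self (volume_setOf_tSq_eq_zero hab)).symm
    _ = ∫ p in B₀, |(fderiv ℝ (psiDInv d a b c) p).det| •
          (F (psiD d a b c (psiDInv d a b c p)) * WD d a b c β γ (psiDInv d a b c p)) :=
        integral_image_eq_integral_abs_det_fderiv_smul volume hB₀
          (fun p hp => (differentiableAt_psiDInv (hR p hp)).hasFDerivAt.hasFDerivWithinAt)
          hinj _
    _ = ∫ p in B₀, (b - a) * (F p * (|p.2| ^ (2 * β) * (1 - ‖p.1‖ ^ 2 - p.2 ^ 2) ^ γ)) := by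
        refine setIntegral_congr_fun hB₀ fun p hp => ?_
        rw [det_fderiv_psiDInv (hR p hp), psiD_psiDInv ha hab hc hp.1, smul_eq_mul, mul_left_comm,
          abs_det_mul_WD_psiDInv ha hab hc β γ hp.1 hp.2, mul_left_comm]
    _ = ∫ p in ballPlus d, (b - a) * (F p * (|p.2| ^ (2 * β) * (1 - ‖p.1‖ ^ 2 - p.2 ^ 2) ^ γ)) :=
        setIntegral_congr_set (sdiff_null_ae_eq_self volume_setOf_snd_eq_zero)
    _ = _ := integral_const_mul _ _

end ChangeOfVariables

lemma integral_LamD_eq_integral_ballPlus {d : ℕ} {a b c : ℝ} (ha : 0 ≤ a) (hab : a < b)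
    (hc : 0 ≤ c) (β γ q : ℝ) (f : Euc d × ℝ → ℝ) {P Q : MvPolynomial (Fin (d + 1)) ℝ}
    (hPQ : EqOn (evP d P ∘ psiDInv d a b c) (evP d Q) (ballPlus d)) :
    ∫ p in LamD d a b c, |f p - evP d P p| ^ q * WD d a b c β γ p =
      (b - a) * ∫ p in ballPlus d, |f (psiDInv d a b c p) - evP d Q p| ^ q *
        (|p.2| ^ (2 * β) * (1 - ‖p.1‖ ^ 2 - p.2 ^ 2) ^ γ) := by
  rw [← integral_LamD_comp_psiD_mul_WD ha hab hc β γ]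
  refine setIntegral_congr_fun measurableSet_LamD fun p hp => ?_
  rw [← hPQ (psiD_mem_ballPlus hab hp), Function.comp_apply, psiDInv_psiD hab hp]

theorem best_approximation_transfers_D_general
    (d : ℕ) (a b c β γ : ℝ) (ha : 0 ≤ a) (hab : a < b) (hc : 0 ≤ c)
    (n : ℕ) (q : ℝ)
    (f : Euc d × ℝ → ℝ) :
    sInf {r : ℝ | ∃ P : MvPolynomial (Fin (d + 1)) ℝ, P.totalDegree ≤ n ∧
        EvenLast d P ∧
        r = (∫ p in LamD d a b c,
              |f p - evP d P p| ^ q * WD d a b c β γ p) ^ (1 / q)}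
      = (b - a) ^ (1 / q) *
        sInf {r : ℝ | ∃ P : MvPolynomial (Fin (d + 1)) ℝ, P.totalDegree ≤ n ∧
          EvenLast d P ∧
          r = (∫ p in ballPlus d,
                |f (psiDInv d a b c p) - evP d P p| ^ q *
                  (|p.2| ^ (2 * β) * (1 - ‖p.1‖ ^ 2 - p.2 ^ 2) ^ γ)) ^ (1 / q)} := by
  have hba : 0 ≤ b - a := (sub_pos.2 hab).le
  have hball : ∀ Q : MvPolynomial (Fin (d + 1)) ℝ, 0 ≤ ∫ p in ballPlus d,
      |f (psiDInv d a b c p) - evP d Q p| ^ q * (|p.2| ^ (2 * β) * (1 - ‖p.1‖ ^ 2 - p.2 ^ 2) ^ γ) :=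
    fun Q => setIntegral_nonneg measurableSet_ballPlus fun p hp =>
      mul_nonneg (by positivity) (mul_nonneg (by positivity)
        (Real.rpow_nonneg (by linarith [hp.1]) _))
  rw [← smul_eq_mul, ← Real.sInf_smul_of_nonneg (by positivity)]
  congr 1
  ext r
  constructor
  · rintro ⟨P, hdeg, hP, rfl⟩
    obtain ⟨Q, hdegQ, hQ, hPQ⟩ := hP.exists_eqOn_comp_psiDInv ha hab hc
    refine ⟨_, ⟨Q, hdegQ.trans hdeg, hQ, rfl⟩, ?_⟩
    rw [integral_LamD_eq_integral_ballPlus ha hab hc β γ q f hPQ, Real.mul_rpow hba (hball Q)]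
    rfl
  · rintro ⟨_, ⟨Q, hdeg, hQ, rfl⟩, rfl⟩
    obtain ⟨P, hdegP, hP, hPQ⟩ := hQ.exists_comp_psiDInv_eqOn ha hab hc
    refine ⟨P, hdegP.trans hdeg, hP, ?_⟩
    rw [integral_LamD_eq_integral_ballPlus ha hab hc β γ q f hPQ, Real.mul_rpow hba (hball Q)]
    rfl

/-- the error of best `L^p` approximation by polynomials of degree at
most `n`, even in the last variable, is the same on `Λ^{d+1}_{a,b,c}` and on `B^{d+1}₊`
up to the factor `(b−a)^{1/p}`. -/
theorem best_approximation_transfers_D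
    (d : ℕ) (hd : 1 ≤ d) (a b c β γ : ℝ) (ha : 0 ≤ a) (hab : a < b) (hc : 0 ≤ c)
    (hβ : -(1 : ℝ) / 2 < β) (hγ : -1 < γ) (n : ℕ) (q : ℝ) (hq : 1 ≤ q)
    (f : Euc d × ℝ → ℝ) (hf : Measurable f)
    (hfint : IntegrableOn (fun p => |f p| ^ q * WD d a b c β γ p) (LamD d a b c)) :
    sInf {r : ℝ | ∃ P : MvPolynomial (Fin (d + 1)) ℝ, P.totalDegree ≤ n ∧
        EvenLast d P ∧
        r = (∫ p in LamD d a b c,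
              |f p - evP d P p| ^ q * WD d a b c β γ p) ^ (1 / q)}
      = (b - a) ^ (1 / q) *
        sInf {r : ℝ | ∃ P : MvPolynomial (Fin (d + 1)) ℝ, P.totalDegree ≤ n ∧
          EvenLast d P ∧
          r = (∫ p in ballPlus d,
                |f (psiDInv d a b c p) - evP d P p| ^ q *
                  (|p.2| ^ (2 * β) * (1 - ‖p.1‖ ^ 2 - p.2 ^ 2) ^ γ)) ^ (1 / q)} :=
  best_approximation_transfers_D_general d a b c β γ ha hab hc n q f
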